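/- arXiv:2207.12828 — 5 statements merged into one kernel-verified Lean document; each statement's English description precedes it below -/
import Mathlib

section
/- If P ⊆ A^{<ω} is piecewise syndetic and P = B ⊔ C is a partition into two sets, then either B or C is piecewise syndetic. -/
/-- `S` is syndetic: there is `ℓ` such that every word `σ` has some `τ` of
length `≤ ℓ` with `τ ++ σ ∈ S`. -/
def Syndetic {A : Type*} (S : Set (List A)) : Prop :=
  ∃ ℓ : ℕ, ∀ σ : List A, ∃ τ : List A, τ.length ≤ ℓ ∧ τ ++ σ ∈ S

/-- `T` is thick: for every `ℓ` there is `σ` with `ρ ++ σ ∈ T` for all `|ρ| ≤ ℓ`. -/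
def Thick {A : Type*} (T : Set (List A)) : Prop :=
  ∀ ℓ : ℕ, ∃ σ : List A, ∀ ρ : List A, ρ.length ≤ ℓ → ρ ++ σ ∈ T

/-- `P` is piecewise syndetic: the intersection of a thick set and a syndetic set. -/
def PiecewiseSyndetic {A : Type*} (P : Set (List A)) : Prop :=
  ∃ T S : Set (List A), Thick T ∧ Syndetic S ∧ P = T ∩ S

/-- The `ℓ`-hull of `P`: words that land in `P` after prepending some word of
length `≤ ℓ`. -/
def MyHull {A : Type*} (l : ℕ) (P : Set (List A)) : Set (List A) :=
  {σ | ∃ τ : List A, τ.length ≤ l ∧ τ ++ σ ∈ P}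

lemma pws_iff_hull_thick {A : Type*} (P : Set (List A)) :
    PiecewiseSyndetic P ↔ ∃ l, Thick (MyHull l P) := by
  constructor
  · rintro ⟨T, S, hT, ⟨l, hS⟩, rfl⟩
    refine ⟨l, fun m => ?_⟩
    obtain ⟨σ, hσ⟩ := hT (m + l)
    refine ⟨σ, fun ρ hρ => ?_⟩
    obtain ⟨τ, hτl, hτ⟩ := hS (ρ ++ σ)
    have hTmem : τ ++ (ρ ++ σ) ∈ T := by
      have := hσ (τ ++ ρ) (by simp only [List.length_append]; omega)
      rwa [List.append_assoc] at this
    exact ⟨τ, hτl, hTmem, hτ⟩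
  · rintro ⟨l, hH⟩
    choose f hf using hH
    set D : Set (List A) := {w | ∃ m, ∃ ρ : List A, ρ.length ≤ m ∧ w = ρ ++ f m} with hD
    refine ⟨P ∪ D, P ∪ Dᶜ, ?_, ?_, ?_⟩
    · intro n
      exact ⟨f n, fun ρ hρ => Or.inr ⟨n, ρ, hρ, rfl⟩⟩
    · refine ⟨l, fun σ => ?_⟩
      by_cases hσ : σ ∈ D
      · obtain ⟨m, ρ, hρ, rfl⟩ := hσ
        obtain ⟨τ, hτ, hmem⟩ := hf m ρ hρ
        exact ⟨τ, hτ, Or.inl hmem⟩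
      · exact ⟨[], by simp, Or.inr hσ⟩
    · ext w
      simp only [Set.mem_inter_iff, Set.mem_union, Set.mem_compl_iff]
      tauto

theorem stmt_1 {A : Type*} [Fintype A] [Nonempty A]
    (P B C : Set (List A)) (hP : PiecewiseSyndetic P)
    (hdisj : Disjoint B C) (hunion : B ∪ C = P) :
    PiecewiseSyndetic B ∨ PiecewiseSyndetic C := by
  by_cases hB : PiecewiseSyndetic B
  · exact Or.inl hB
  right
  rw [pws_iff_hull_thick] at hP ⊢
  obtain ⟨l, hH⟩ := hP
  rw [pws_iff_hull_thick, not_exists] at hB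
  have hBl : ¬ Thick (MyHull l B) := hB l
  unfold Thick at hBl
  push_neg at hBl
  obtain ⟨n, hn⟩ := hBl
  choose g hg1 hg2 using hn
  refine ⟨l + n, fun m => ?_⟩
  obtain ⟨σ, hσ⟩ := hH (m + n)
  refine ⟨σ, fun ρ' hρ' => ?_⟩
  set ρ := g (ρ' ++ σ) with hρdef
  have hρlen : ρ.length ≤ n := hg1 _
  have hPmem : (ρ ++ ρ') ++ σ ∈ MyHull l P := by
    apply hσ
    simp only [List.length_append]; omega
  obtain ⟨τ, hτl, hτ⟩ := hPmem
  have hnotB : τ ++ ((ρ ++ ρ') ++ σ) ∉ B := by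
    intro hcon
    apply hg2 (ρ' ++ σ)
    refine ⟨τ, hτl, ?_⟩
    rw [← hρdef]
    simpa [List.append_assoc] using hcon
  have hPm : τ ++ ((ρ ++ ρ') ++ σ) ∈ P := hτ
  rw [← hunion] at hPm
  have hC : τ ++ ((ρ ++ ρ') ++ σ) ∈ C := hPm.resolve_left hnotB
  refine ⟨τ ++ ρ, ?_, ?_⟩
  · simp only [List.length_append]; omega
  · simpa [List.append_assoc] using hC
end

section
/- If P ⊆ A^{<ω} is piecewise syndetic and P = C_0 ⊔ C_1 ⊔ … ⊔ C_{k-1} is a partition into k pieces, then some C_i is piecewise syndetic. -/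
/-- Intrinsic characterization of piecewise syndeticity. -/
def Qset {A : Type*} (P : Set (List A)) : Prop :=
  ∃ ℓ : ℕ, ∀ m : ℕ, ∃ σ : List A, ∀ ρ : List A, ρ.length ≤ m →
    ∃ τ : List A, τ.length ≤ ℓ ∧ τ ++ ρ ++ σ ∈ P

theorem pws_to_Q {A : Type*} {P : Set (List A)} (h : PiecewiseSyndetic P) : Qset P := by
  obtain ⟨T, S, hT, ⟨ℓ, hS⟩, rfl⟩ := h
  refine ⟨ℓ, fun m => ?_⟩
  obtain ⟨σ, hσ⟩ := hT (ℓ + m)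
  refine ⟨σ, fun ρ hρ => ?_⟩
  obtain ⟨τ, hτℓ, hτS⟩ := hS (ρ ++ σ)
  refine ⟨τ, hτℓ, ?_, by simpa [List.append_assoc] using hτS⟩
  have := hσ (τ ++ ρ) (by simp; omega)
  simpa [List.append_assoc] using this

theorem Q_to_pws {A : Type*} {P : Set (List A)} (h : Qset P) : PiecewiseSyndetic P := by
  obtain ⟨ℓ, h⟩ := h
  choose σ hσ using h
  set T : Set (List A) := P ∪ ⋃ m : ℕ, {w | ∃ ρ : List A, ρ.length ≤ m ∧ w = ρ ++ σ m} with hTdef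
  refine ⟨T, P ∪ Tᶜ, ?_, ?_, ?_⟩
  · intro ℓ'
    refine ⟨σ ℓ', fun ρ hρ => ?_⟩
    exact Or.inr (Set.mem_iUnion.2 ⟨ℓ', ρ, hρ, rfl⟩)
  · refine ⟨ℓ, fun w => ?_⟩
    by_cases hw : w ∈ T
    · rcases hw with hw | hw
      · exact ⟨[], by simp, Or.inl (by simpa using hw)⟩
      · obtain ⟨m, ρ, hρ, rfl⟩ := Set.mem_iUnion.1 hw
        obtain ⟨τ, hτℓ, hτ⟩ := hσ m ρ hρ
        exact ⟨τ, hτℓ, Or.inl (by simpa [List.append_assoc] using hτ)⟩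
    · exact ⟨[], by simp, Or.inr (by simpa using hw)⟩
  · ext w
    constructor
    · intro hw
      exact ⟨Or.inl hw, Or.inl hw⟩
    · rintro ⟨hwT, hwS | hwS⟩
      · exact hwS
      · exact absurd hwT hwS

theorem Q_union {A : Type*} {X Y : Set (List A)} (h : Qset (X ∪ Y)) :
    Qset X ∨ Qset Y := by
  by_cases hY : Qset Y
  · exact Or.inr hY
  left
  obtain ⟨ℓ, h⟩ := h
  rw [Qset] at hY
  push_neg at hY
  obtain ⟨m₀, H⟩ := hY ℓ
  refine ⟨ℓ + m₀, fun m => ?_⟩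
  obtain ⟨σ, hσ⟩ := h (m + m₀)
  refine ⟨σ, fun ρ hρ => ?_⟩
  obtain ⟨ρ₀, hρ₀, hρ₀Y⟩ := H (ρ ++ σ)
  obtain ⟨τ, hτℓ, hτ⟩ := hσ (ρ₀ ++ ρ) (by simp; omega)
  rcases hτ with hτ | hτ
  · refine ⟨τ ++ ρ₀, by simp; omega, by simpa [List.append_assoc] using hτ⟩
  · exact absurd (by simpa [List.append_assoc] using hτ) (hρ₀Y τ hτℓ)

theorem Q_partition {A : Type*} : ∀ (k : ℕ) (C : Fin k → Set (List A)),
    Qset (⋃ i, C i) → ∃ i, Qset (C i) := by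
  intro k
  induction k with
  | zero =>
    intro C hC
    obtain ⟨ℓ, h⟩ := hC
    obtain ⟨σ, hσ⟩ := h 0
    obtain ⟨τ, _, hτ⟩ := hσ [] (by simp)
    simp at hτ
  | succ n ih =>
    intro C hC
    have hsplit : (⋃ i, C i) = C 0 ∪ ⋃ i : Fin n, C i.succ := by
      ext x
      simp [Fin.exists_fin_succ]
    rw [hsplit] at hC
    rcases Q_union hC with h | h
    · exact ⟨0, h⟩
    · obtain ⟨i, hi⟩ := ih (fun i => C i.succ) h
      exact ⟨i.succ, hi⟩

theorem stmt_2 {A : Type*} [Fintype A] [Nonempty A]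
    (P : Set (List A)) (hP : PiecewiseSyndetic P)
    (k : ℕ) (C : Fin k → Set (List A))
    (hdisj : ∀ i j, i ≠ j → Disjoint (C i) (C j))
    (hunion : (⋃ i, C i) = P) :
    ∃ i, PiecewiseSyndetic (C i) := by
  have hQ : Qset (⋃ i, C i) := hunion ▸ pws_to_Q hP
  obtain ⟨i, hi⟩ := Q_partition k C hQ
  exact ⟨i, Q_to_pws hi⟩
end

section
/- Let W be an ω-variable word over the alphabet {0}. Then for all 1-variable words u, v over {0}, u E v if and only if W[u] E W[v], where E is the triangle-free Henson edge relation. -/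
/-- One-directional edge condition on `1`-variable words over the unary alphabet `{0}`,
represented as lists of booleans where `true` stands for the variable `x₀` and
`false` for the letter `0`: `v E w` (for `|v| < |w|`) iff the passing number of `w`
at `|v|` is the variable, and there is no common occurrence of the variable. -/
def EdgeLt (v w : List Bool) : Prop :=
  v.length < w.length ∧ w.getD v.length false = true ∧
    ¬ ∃ i < v.length, v.getD i false = true ∧ w.getD i false = true

/-- The (symmetric) edge relation of the graph `𝔾`. -/
def EdgeRel (v w : List Bool) : Prop :=
  EdgeLt v w ∨ EdgeLt w v

/-- `W : ℕ → Option ℕ` (with `none` the letter `0` and `some j` the variable `x_j`)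
is an ω-variable word over `{0}`, with `fo j` the first occurrence of `x_j`:
each variable occurs, `fo j` is its first occurrence, and first occurrences
are in increasing order of variable index. -/
def IsOmegaVW (W : ℕ → Option ℕ) (fo : ℕ → ℕ) : Prop :=
  (∀ j, W (fo j) = some j) ∧ (∀ j i, i < fo j → W i ≠ some j) ∧
    (∀ j, fo j < fo (j + 1))

/-- The substitution `W[u]`: replace each occurrence of `x_j` (`j < |u|`) by `u(j)`
and truncate just before the first occurrence of `x_{|u|}`. -/
def substW (W : ℕ → Option ℕ) (fo : ℕ → ℕ) (u : List Bool) : List Bool :=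
  (List.range (fo u.length)).map (fun i =>
    match W i with
    | none => false
    | some j => u.getD j false)

lemma substW_length (W : ℕ → Option ℕ) (fo : ℕ → ℕ) (u : List Bool) :
    (substW W fo u).length = fo u.length := by simp [substW]

lemma substW_getD (W : ℕ → Option ℕ) (fo : ℕ → ℕ) (u : List Bool) {i : ℕ}
    (hi : i < fo u.length) :
    (substW W fo u).getD i false =
      (match W i with | none => false | some j => u.getD j false) := by
  rw [substW, List.getD_eq_getElem?_getD, List.getElem?_map, List.getElem?_range hi]
  rfl

lemma edgeLt_iff (W : ℕ → Option ℕ) (fo : ℕ → ℕ) (hW : IsOmegaVW W fo)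
    (u v : List Bool) :
    EdgeLt u v ↔ EdgeLt (substW W fo u) (substW W fo v) := by
  obtain ⟨h1, h2, h3⟩ := hW
  have hmono : StrictMono fo := strictMono_nat_of_lt_succ h3
  have hsmall : ∀ {n i j : ℕ}, i < fo n → W i = some j → j < n := by
    intro n i j hi hij
    by_contra h
    exact h2 j i (lt_of_lt_of_le hi (hmono.monotone (not_lt.1 h))) hij
  constructor
  · rintro ⟨hlen, hpass, hno⟩
    refine ⟨?_, ?_, ?_⟩
    · simpa [substW_length] using hmono hlen
    · rw [substW_length, substW_getD W fo v (hmono hlen), h1 u.length]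
      exact hpass
    · rintro ⟨i, hi, ha, hb⟩
      rw [substW_length] at hi
      rw [substW_getD W fo u hi] at ha
      rw [substW_getD W fo v (hi.trans (hmono hlen))] at hb
      cases hWi : W i with
      | none => rw [hWi] at ha; exact Bool.false_ne_true ha
      | some j =>
        rw [hWi] at ha hb
        exact hno ⟨j, hsmall hi hWi, ha, hb⟩
  · rintro ⟨hlen, hpass, hno⟩
    rw [substW_length, substW_length] at hlen
    have hlen' : u.length < v.length := hmono.lt_iff_lt.1 hlen
    refine ⟨hlen', ?_, ?_⟩
    · rw [substW_length, substW_getD W fo v hlen, h1 u.length] at hpass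
      exact hpass
    · rintro ⟨j, hj, ha, hb⟩
      refine hno ⟨fo j, ?_, ?_, ?_⟩
      · rw [substW_length]; exact hmono hj
      · rw [substW_getD W fo u (hmono hj), h1 j]; exact ha
      · rw [substW_getD W fo v ((hmono hj).trans hlen), h1 j]; exact hb

theorem stmt_9 (W : ℕ → Option ℕ) (fo : ℕ → ℕ) (hW : IsOmegaVW W fo)
    (u v : List Bool) (hu : true ∈ u) (hv : true ∈ v) :
    EdgeRel u v ↔ EdgeRel (substW W fo u) (substW W fo v) := by
  exact or_congr (edgeLt_iff W fo hW u v) (edgeLt_iff W fo hW v u)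
end

section
/- For any graph G on the natural numbers, the map sending vertex i to the word s of length i over {0, x₀} with s(j) = x₀ iff i and j are adjacent (and s(j) = 0 otherwise) is a graph embedding of G into the structure (variable words over {0}, E), provided G is triangle-free; i.e., for i < j, i and j are adjacent in G if and only if φ(i) E φ(j). -/
lemma phi_len (G : SimpleGraph ℕ) [DecidableRel G.Adj] (φ : ℕ → List Bool)
    (hφ : ∀ i, φ i = (List.range i).map (fun j => decide (G.Adj i j))) (i : ℕ) :
    (φ i).length = i := by simp [hφ]

lemma phi_getD (G : SimpleGraph ℕ) [DecidableRel G.Adj] (φ : ℕ → List Bool)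
    (hφ : ∀ i, φ i = (List.range i).map (fun j => decide (G.Adj i j)))
    (i k : ℕ) (hk : k < i) :
    (φ i).getD k false = decide (G.Adj i k) := by
  rw [hφ, List.getD_eq_getElem?_getD, List.getElem?_map, List.getElem?_range hk]
  simp

theorem stmt_11 (G : SimpleGraph ℕ) [DecidableRel G.Adj] (hG : G.CliqueFree 3)
    (φ : ℕ → List Bool)
    (hφ : ∀ i, φ i = (List.range i).map (fun j => decide (G.Adj i j))) :
    ∀ i j : ℕ, i < j → (G.Adj i j ↔ EdgeRel (φ i) (φ j)) := by
  intro i j hij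
  have hli := phi_len G φ hφ i
  have hlj := phi_len G φ hφ j
  constructor
  · intro hadj
    left
    refine ⟨by omega, ?_, ?_⟩
    · rw [hli, phi_getD G φ hφ j i hij]
      simpa using hadj.symm
    · rintro ⟨k, hk, hvi, hwj⟩
      rw [hli] at hk
      rw [phi_getD G φ hφ i k hk] at hvi
      rw [phi_getD G φ hφ j k (hk.trans hij)] at hwj
      simp only [decide_eq_true_eq] at hvi hwj
      exact hG {i, j, k} (SimpleGraph.is3Clique_triple_iff.mpr ⟨hadj, hvi, hwj⟩)
    
  · rintro (⟨_, hp, _⟩ | ⟨hlen, _, _⟩)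
    · rw [hli, phi_getD G φ hφ j i hij] at hp
      exact (decide_eq_true_eq.mp hp).symm
    · omega
end

section
/- There is a one-to-one correspondence between ordered n-variable words over a finite alphabet A and OVW-trees of dimension n: the map sending an ordered n-variable word w to the set T = { w[u] : u ∈ A^{<n} } (words u of length at most n, with substitution and truncation) is injective; i.e., if two ordered n-variable words generate the same OVW-tree then they are equal. -/
/-- `w` is an ordered `n`-variable word over `A`: exactly the variables `x_j`,
`j < n`, occur, each at least once, and variable indices occur in nondecreasing
order of position (so the last occurrence of `x_j` precedes the first occurrence
of `x_{j+1}`). -/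
def OrderedNVarWord {A : Type*} (n : ℕ) (w : List (A ⊕ ℕ)) : Prop :=
  (∀ j : ℕ, Sum.inr j ∈ w → j < n) ∧ (∀ j < n, Sum.inr j ∈ w) ∧
    (∀ i i' j j' : ℕ, i < i' → w[i]? = some (Sum.inr j) →
      w[i']? = some (Sum.inr j') → j ≤ j')

/-- The substitution `w[u]` of a word `u` over `A` into a variable word `w`:
replace each occurrence of `x_j` (`j < |u|`) by `u(j)` and truncate just before
the first occurrence of `x_{|u|}`. -/
def substA {A : Type*} [Inhabited A] [DecidableEq A] (w : List (A ⊕ ℕ))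
    (u : List A) : List A :=
  (w.takeWhile (fun a => a ≠ Sum.inr u.length)).map (fun a =>
    match a with
    | Sum.inl b => b
    | Sum.inr j => u.getD j default)

/-!
The lengths of the words in the tree generated by an ordered `n`-variable word `w` are the first
positions of `x_0, …, x_{n-1}` followed by `|w|`. This sequence is strictly increasing, so the tree
determines it, and with it the variable carried by each variable position. A word of the tree of
full length `|w|` arises only from a substitution of length `n`; a position carries the constant
`a` exactly when all these words have `a` there, because with two letters available a variable
can be sent to a letter different from `a`.
-/

namespace List

variable {α : Type*}

theorem length_takeWhile_ne [DecidableEq α] (l : List α) (a : α) :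
    (l.takeWhile (· ≠ a)).length = l.findIdx (· = a) := by
  rw [takeWhile_eq_take_findIdx_not, length_take, Nat.min_eq_left findIdx_le_length]
  simp

theorem findIdx_le_of_getElem?_eq {p : α → Bool} {l : List α} {i : ℕ} {a : α}
    (h : l[i]? = some a) (ha : p a) : l.findIdx p ≤ i := by
  obtain ⟨hi, rfl⟩ := getElem?_eq_some_iff.mp h
  by_contra! hlt
  simp [not_of_lt_findIdx hlt] at ha

end List

def substLetter {A : Type*} [Inhabited A] (u : List A) : A ⊕ ℕ → A :=
  Sum.elim id (u.getD · default)

/-- The first position of `x_m` in `w`; it is `w.length` when `x_m` does not occur, matching the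
truncation in `substA`. -/
def firstVarPos {A : Type*} [DecidableEq A] (w : List (A ⊕ ℕ)) (m : ℕ) : ℕ :=
  w.findIdx (· = Sum.inr m)

def ovwTree {A : Type*} [Inhabited A] [DecidableEq A] (n : ℕ) (w : List (A ⊕ ℕ)) :
    Set (List A) :=
  {v | ∃ u : List A, u.length ≤ n ∧ substA w u = v}

section FirstVarPos

variable {A : Type*} [DecidableEq A] {w : List (A ⊕ ℕ)}

theorem firstVarPos_le_of_getElem?_eq {i j : ℕ} (hi : w[i]? = some (Sum.inr j)) :
    firstVarPos w j ≤ i :=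
  List.findIdx_le_of_getElem?_eq hi (by simp)

theorem getElem?_firstVarPos {m : ℕ} (hm : Sum.inr m ∈ w) :
    w[firstVarPos w m]? = some (Sum.inr m) := by
  have hlt : firstVarPos w m < w.length := List.findIdx_lt_length_of_exists ⟨_, hm, by simp⟩
  exact List.getElem?_eq_some_iff.mpr ⟨hlt, of_decide_eq_true (List.findIdx_getElem (w := hlt))⟩

end FirstVarPos

section Substitution

variable {A : Type*} [Inhabited A] [DecidableEq A]

theorem length_substA (w : List (A ⊕ ℕ)) (u : List A) :
    (substA w u).length = firstVarPos w u.length := by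
  rw [substA, List.length_map, List.length_takeWhile_ne, firstVarPos]

theorem range_firstVarPos_eq_image_length_ovwTree (n : ℕ) (w : List (A ⊕ ℕ)) :
    Set.range (fun m : Fin (n + 1) => firstVarPos w m) = List.length '' ovwTree n w := by
  ext k
  constructor
  · rintro ⟨m, rfl⟩
    exact ⟨substA w (List.replicate m default), ⟨_, by simpa using m.is_le, rfl⟩,
      by simp [length_substA]⟩
  · rintro ⟨_, ⟨u, hu, rfl⟩, rfl⟩
    exact ⟨⟨u.length, Nat.lt_succ_of_le hu⟩, (length_substA w u).symm⟩

end Substitution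

namespace OrderedNVarWord

variable {A : Type*} {n : ℕ} {w : List (A ⊕ ℕ)}

section Positions

variable [DecidableEq A]

theorem firstVarPos_eq_length (h : OrderedNVarWord n w) : firstVarPos w n = w.length :=
  List.findIdx_eq_length_of_false fun x hx => by
    simpa using fun hxn : x = Sum.inr n => (h.1 n (hxn ▸ hx)).false

theorem lt_firstVarPos_succ (h : OrderedNVarWord n w) {i j : ℕ}
    (hi : w[i]? = some (Sum.inr j)) : i < firstVarPos w (j + 1) := by
  obtain ⟨hlt, hwi⟩ := List.getElem?_eq_some_iff.mp hi
  refine (List.lt_findIdx_iff _ _ _).mpr ⟨hlt, fun k hk => ?_⟩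
  rw [decide_eq_false_iff_not]
  intro hk'
  rcases hk.lt_or_eq with hk | rfl
  · exact absurd (h.2.2 k i (j + 1) j hk (List.getElem?_eq_some_iff.mpr ⟨_, hk'⟩) hi) (by omega)
  · simp [hwi] at hk'

theorem strictMono_firstVarPos (h : OrderedNVarWord n w) :
    StrictMono fun m : Fin (n + 1) => firstVarPos w m :=
  Fin.strictMono_iff_lt_succ.mpr fun m =>
    h.lt_firstVarPos_succ (getElem?_firstVarPos (h.2.1 m m.isLt))

theorem firstVarPos_mono (h : OrderedNVarWord n w) {m m' : ℕ} (hmm' : m ≤ m') (hm' : m' ≤ n) :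
    firstVarPos w m ≤ firstVarPos w m' :=
  h.strictMono_firstVarPos.monotone (a := ⟨m, by omega⟩) (b := ⟨m', by omega⟩) hmm'

end Positions

variable [Inhabited A] [DecidableEq A]

theorem substA_eq_map (h : OrderedNVarWord n w) {u : List A} (hu : u.length = n) :
    substA w u = w.map (substLetter u) := by
  rw [substA, List.takeWhile_eq_self_iff.mpr]
  · congr 1
    funext x
    cases x <;> rfl
  · intro x hx
    rcases x with _ | j
    · simp
    · simpa [hu] using (h.1 j hx).ne

end OrderedNVarWord

theorem eq_inl_of_forall_substLetter_eq {A : Type*} [Inhabited A] [Nontrivial A] {n : ℕ}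
    {x : A ⊕ ℕ} {a : A}
    (hx : ∀ j, x = Sum.inr j → j < n) (h : ∀ u : List A, u.length = n → substLetter u x = a) :
    x = Sum.inl a := by
  rcases x with b | j
  · simpa [substLetter] using h (List.replicate n default) (by simp)
  · obtain ⟨a', ha'⟩ := exists_ne a
    have hj := hx j rfl
    exact absurd (h (List.replicate n a') (by simp)) (by simpa [substLetter, hj] using ha')

section Tree

variable {A : Type*} [DecidableEq A] {n : ℕ} {w₁ w₂ : List (A ⊕ ℕ)}

theorem le_of_getElem?_eq_inr_of_firstVarPos_eq (h₁ : OrderedNVarWord n w₁)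
    (h₂ : OrderedNVarWord n w₂) (hpos : ∀ m ≤ n, firstVarPos w₁ m = firstVarPos w₂ m) {i j₁ j₂ : ℕ}
    (hi₁ : w₁[i]? = some (Sum.inr j₁)) (hi₂ : w₂[i]? = some (Sum.inr j₂)) : j₁ ≤ j₂ := by
  by_contra! hlt
  have hj₁ := h₁.1 j₁ (List.mem_of_getElem? hi₁)
  have hmono := h₁.firstVarPos_mono (show j₂ + 1 ≤ j₁ from hlt) hj₁.le
  have hle := firstVarPos_le_of_getElem?_eq hi₁
  have hlt' := h₂.lt_firstVarPos_succ hi₂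
  have hpos' := hpos (j₂ + 1) (by omega)
  omega

variable [Inhabited A]

theorem firstVarPos_eq_of_ovwTree_eq (h₁ : OrderedNVarWord n w₁) (h₂ : OrderedNVarWord n w₂)
    (heq : ovwTree n w₁ = ovwTree n w₂) {m : ℕ} (hm : m ≤ n) :
    firstVarPos w₁ m = firstVarPos w₂ m := by
  have hfun := (h₁.strictMono_firstVarPos.range_inj h₂.strictMono_firstVarPos).mp <| by
    rw [range_firstVarPos_eq_image_length_ovwTree, range_firstVarPos_eq_image_length_ovwTree, heq]
  exact congrFun hfun ⟨m, Nat.lt_succ_of_le hm⟩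

theorem exists_substA_eq_of_ovwTree_subset (h₁ : OrderedNVarWord n w₁)
    (h₂ : OrderedNVarWord n w₂) (hlen : w₁.length = w₂.length)
    (hsub : ovwTree n w₁ ⊆ ovwTree n w₂) {u : List A} (hu : u.length = n) :
    ∃ u' : List A, u'.length = n ∧ substA w₂ u' = substA w₁ u := by
  obtain ⟨u', hu', he⟩ := hsub ⟨u, hu.le, rfl⟩
  refine ⟨u', ?_, he⟩
  have hpos : firstVarPos w₂ u'.length = firstVarPos w₂ n := by
    rw [← length_substA, he, length_substA, hu, h₁.firstVarPos_eq_length,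
      h₂.firstVarPos_eq_length, hlen]
  exact congrArg Fin.val
    (h₂.strictMono_firstVarPos.injective (a₁ := ⟨u'.length, by omega⟩) (a₂ := Fin.last n) hpos)

theorem getElem?_eq_inl_of_ovwTree_subset [Nontrivial A] (h₁ : OrderedNVarWord n w₁)
    (h₂ : OrderedNVarWord n w₂) (hlen : w₁.length = w₂.length)
    (hsub : ovwTree n w₂ ⊆ ovwTree n w₁) {i : ℕ} {a : A} (hi : w₁[i]? = some (Sum.inl a)) :
    w₂[i]? = some (Sum.inl a) := by
  obtain ⟨x, hx⟩ : ∃ x, w₂[i]? = some x :=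
    ⟨_, List.getElem?_eq_getElem (hlen ▸ (List.getElem?_eq_some_iff.mp hi).1)⟩
  suffices x = Sum.inl a by rw [hx, this]
  refine eq_inl_of_forall_substLetter_eq (fun j hj => h₂.1 j (List.mem_of_getElem? (hj ▸ hx)))
    fun u hu => ?_
  obtain ⟨u', hu', he⟩ := exists_substA_eq_of_ovwTree_subset h₂ h₁ hlen.symm hsub hu
  simpa [h₁.substA_eq_map hu', h₂.substA_eq_map hu, hi, hx, substLetter] using
    (congrArg (·[i]?) he).symm

theorem getElem?_eq_of_ovwTree_eq [Nontrivial A] (h₁ : OrderedNVarWord n w₁)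
    (h₂ : OrderedNVarWord n w₂) (heq : ovwTree n w₁ = ovwTree n w₂) {i : ℕ} {x : A ⊕ ℕ}
    (hi : w₁[i]? = some x) : w₂[i]? = some x := by
  have hpos (m : ℕ) (hm : m ≤ n) := firstVarPos_eq_of_ovwTree_eq h₁ h₂ heq hm
  have hlen : w₁.length = w₂.length := by
    rw [← h₁.firstVarPos_eq_length, ← h₂.firstVarPos_eq_length, hpos n le_rfl]
  rcases x with a | j₁
  · exact getElem?_eq_inl_of_ovwTree_subset h₁ h₂ hlen heq.ge hi
  obtain ⟨y, hy⟩ : ∃ y, w₂[i]? = some y :=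
    ⟨_, List.getElem?_eq_getElem (hlen ▸ (List.getElem?_eq_some_iff.mp hi).1)⟩
  rcases y with b | j₂
  · simpa [hi] using getElem?_eq_inl_of_ovwTree_subset h₂ h₁ hlen.symm heq.le hy
  · rw [hy, le_antisymm (le_of_getElem?_eq_inr_of_firstVarPos_eq h₁ h₂ hpos hi hy)
      (le_of_getElem?_eq_inr_of_firstVarPos_eq h₂ h₁ (fun m hm => (hpos m hm).symm) hy hi)]

end Tree

theorem stmt_16 {A : Type} [Fintype A] [Inhabited A] [DecidableEq A]
    (hA : 2 ≤ Fintype.card A) (n : ℕ) (w₁ w₂ : List (A ⊕ ℕ))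
    (h₁ : OrderedNVarWord n w₁) (h₂ : OrderedNVarWord n w₂)
    (heq : {v | ∃ u : List A, u.length ≤ n ∧ substA w₁ u = v} =
           {v | ∃ u : List A, u.length ≤ n ∧ substA w₂ u = v}) :
    w₁ = w₂ := by
  have : Nontrivial A := Fintype.one_lt_card_iff_nontrivial.mp hA
  exact List.ext_getElem? fun i => Option.ext fun x =>
    ⟨getElem?_eq_of_ovwTree_eq h₁ h₂ heq, getElem?_eq_of_ovwTree_eq h₂ h₁ heq.symm⟩
end
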